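/- arXiv:2404.11709 — 3 statements merged into one kernel-verified Lean document; each statement's English description precedes it below -/
import Mathlib

section
/- Let d ≥ 1, r, m ≥ 0, and let Q_1, …, Q_m, Q be polynomials in ℂ[x_1, …, x_r] (with commuting variables). Suppose that every assignment of d-th roots of unity to x_1, …, x_r that satisfies Q_1 = ⋯ = Q_m = 0 also satisfies Q = 0. Then for every complex Hilbert space H and every collection A_1, …, A_r of pairwise commuting bounded normal linear operators on H with A_i^d = I for all i (so that evaluation of any polynomial of ℂ[x_1,…,x_r] at A_1, …, A_r is well defined, e.g. inside the commutative subalgebra they generate), if Q_ℓ(A_1, …, A_r) = 0 for all ℓ ∈ [m], then Q(A_1, …, A_r) = 0. -/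
/-!
Since `X ^ d - 1` has `d` distinct roots, evaluating the Lagrange basis polynomials at the
`d`-th roots of unity on an element `x` with `x ^ d = 1` gives elements `L_λ(x)` summing to `1`
with `x * L_λ(x) = λ • L_λ(x)`. For a commuting family `x₁, …, x_r` the products
`E_v = ∏ i, L_{v i}(x i)`, over grid points `v` with all `v i ^ d = 1`, therefore satisfy
`Σ_v E_v = 1` and `P(x) * E_v = P(v) • E_v`, so `P(x) = Σ_v P(v) • E_v`. If every `Q_ℓ(x)`
vanishes, then `E_v = 0` unless `v` is a common zero of the `Q_ℓ`, where `P(v) = 0` by hypothesis.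
-/

open scoped BigOperators

/-- Evaluation of a multivariate polynomial over `ℂ` at a family of (pairwise commuting)
elements of a `ℂ`-algebra, defined by summing monomials. -/
noncomputable def mvEval {r : ℕ} {A : Type*} [Ring A] [Algebra ℂ A]
    (f : Fin r → A) (Q : MvPolynomial (Fin r) ℂ) : A :=
  ∑ m ∈ Q.support, Q.coeff m • (List.ofFn (fun i => f i ^ (m i))).prod

open Polynomial Lagrange

namespace Lagrange

theorem X_sub_C_mul_basis_self {ι F : Type*} [Field F] [DecidableEq ι] {s : Finset ι}
    (v : ι → F) {i : ι} (hi : i ∈ s) :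
    (X - C (v i)) * Lagrange.basis s v i = C (nodalWeight s v i) * nodal s v := by
  rw [basis_eq_prod_sub_inv_mul_nodal_div hi, ← nodal_erase_eq_nodal_div hi,
    nodal_eq_mul_nodal_erase hi]
  ring

variable {K B : Type*} [Field K] [CommRing B] [Algebra K B] {s : Finset K} {x : B}

theorem aeval_nodal_nthRootsFinset_one {d : ℕ} (hd : 0 < d) {ζ : K} (hζ : IsPrimitiveRoot ζ d)
    (hx : x ^ d = 1) : aeval x (nodal (nthRootsFinset d (1 : K)) id) = 0 := by
  rw [nodal_eq, Function.id_def, ← X_pow_sub_one_eq_prod hd hζ, map_sub, map_pow, aeval_X, hx,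
    map_one, sub_self]

variable [DecidableEq K]

theorem sum_aeval_basis (hx : aeval x (nodal s id) = 0) :
    ∑ a ∈ s, aeval x (Lagrange.basis s id a) = 1 := by
  rcases s.eq_empty_or_nonempty with rfl | hs
  · simpa using hx.symm
  · rw [← map_sum, sum_basis (Set.injOn_id _) hs, map_one]

theorem mul_aeval_basis_self (hx : aeval x (nodal s id) = 0) {a : K} (ha : a ∈ s) :
    x * aeval x (Lagrange.basis s id a) = a • aeval x (Lagrange.basis s id a) := by
  have := congrArg (aeval x) (X_sub_C_mul_basis_self id ha)
  rw [map_mul, map_mul, hx, mul_zero, map_sub, aeval_X, aeval_C, sub_mul, sub_eq_zero] at this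
  rwa [Algebra.smul_def]

end Lagrange

section JointEigenIdempotents

variable {K B σ : Type*} [Field K] [DecidableEq K] [CommRing B] [Algebra K B]
  [Fintype σ] [DecidableEq σ] {s : σ → Finset K} {x : σ → B}

noncomputable def jointEigenIdempotent (s : σ → Finset K) (x : σ → B) (v : σ → K) : B :=
  ∏ i, aeval (x i) (Lagrange.basis (s i) id (v i))

theorem sum_jointEigenIdempotent (hx : ∀ i, aeval (x i) (nodal (s i) id) = 0) :
    ∑ v ∈ Fintype.piFinset s, jointEigenIdempotent s x v = 1 := by
  unfold jointEigenIdempotent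
  rw [← Finset.prod_univ_sum s fun i a => aeval (x i) (Lagrange.basis (s i) id a)]
  exact Finset.prod_eq_one fun i _ => sum_aeval_basis (hx i)

theorem mul_jointEigenIdempotent (hx : ∀ i, aeval (x i) (nodal (s i) id) = 0)
    {v : σ → K} (hv : v ∈ Fintype.piFinset s) (i : σ) :
    x i * jointEigenIdempotent s x v = v i • jointEigenIdempotent s x v := by
  rw [jointEigenIdempotent, ← Finset.mul_prod_erase _ _ (Finset.mem_univ i), ← mul_assoc,
    mul_aeval_basis_self (hx i) (Fintype.mem_piFinset.mp hv i), smul_mul_assoc]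

theorem aeval_mul_jointEigenIdempotent (hx : ∀ i, aeval (x i) (nodal (s i) id) = 0)
    {v : σ → K} (hv : v ∈ Fintype.piFinset s) (P : MvPolynomial σ K) :
    MvPolynomial.aeval x P * jointEigenIdempotent s x v
      = MvPolynomial.eval v P • jointEigenIdempotent s x v := by
  induction P using MvPolynomial.induction_on with
  | C c => simp [Algebra.smul_def]
  | add p q hp hq => rw [map_add, map_add, add_mul, hp, hq, add_smul]
  | mul_X p i hp =>
    rw [map_mul, MvPolynomial.aeval_X, mul_assoc, mul_jointEigenIdempotent hx hv i,
      mul_smul_comm, hp, smul_smul, map_mul, MvPolynomial.eval_X, mul_comm]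

theorem aeval_eq_sum_eval_smul_jointEigenIdempotent
    (hx : ∀ i, aeval (x i) (nodal (s i) id) = 0) (P : MvPolynomial σ K) :
    MvPolynomial.aeval x P
      = ∑ v ∈ Fintype.piFinset s, MvPolynomial.eval v P • jointEigenIdempotent s x v := by
  rw [← mul_one (MvPolynomial.aeval x P), ← sum_jointEigenIdempotent hx, Finset.mul_sum]
  exact Finset.sum_congr rfl fun v hv => aeval_mul_jointEigenIdempotent hx hv P

theorem aeval_eq_zero_of_forall_mem_piFinset {ι : Type*}
    (hx : ∀ i, aeval (x i) (nodal (s i) id) = 0) (Q : ι → MvPolynomial σ K)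
    (P : MvPolynomial σ K)
    (hgrid : ∀ v ∈ Fintype.piFinset s, (∀ ℓ, MvPolynomial.eval v (Q ℓ) = 0) →
      MvPolynomial.eval v P = 0)
    (hQ : ∀ ℓ, MvPolynomial.aeval x (Q ℓ) = 0) :
    MvPolynomial.aeval x P = 0 := by
  rw [aeval_eq_sum_eval_smul_jointEigenIdempotent hx]
  refine Finset.sum_eq_zero fun v hv => ?_
  by_cases hQv : ∀ ℓ, MvPolynomial.eval v (Q ℓ) = 0
  · rw [hgrid v hv hQv, zero_smul]
  · obtain ⟨ℓ, hℓ⟩ := not_forall.mp hQv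
    have hE : MvPolynomial.eval v (Q ℓ) • jointEigenIdempotent s x v = 0 := by
      rw [← aeval_mul_jointEigenIdempotent hx hv, hQ ℓ, zero_mul]
    rw [(smul_eq_zero.mp hE).resolve_left hℓ, smul_zero]

end JointEigenIdempotents

section mvEval

variable {r : ℕ}

theorem mvEval_eq_aeval {B : Type*} [CommRing B] [Algebra ℂ B]
    (f : Fin r → B) (Q : MvPolynomial (Fin r) ℂ) :
    mvEval f Q = MvPolynomial.aeval f Q := by
  conv_rhs => rw [Q.as_sum, map_sum]
  refine Finset.sum_congr rfl fun m _ => ?_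
  rw [MvPolynomial.aeval_monomial, List.prod_ofFn, Algebra.smul_def, Finsupp.prod_pow]

theorem AlgHom.map_mvEval {B C : Type*} [Ring B] [Algebra ℂ B] [Ring C] [Algebra ℂ C]
    (φ : B →ₐ[ℂ] C) (f : Fin r → B) (Q : MvPolynomial (Fin r) ℂ) :
    φ (mvEval f Q) = mvEval (fun i => φ (f i)) Q := by
  simp only [mvEval, map_sum, map_smul, map_list_prod, List.map_ofFn, Function.comp_def, map_pow]

end mvEval

open scoped IsMulCommutative in
theorem mvEval_eq_zero_of_forall_pow_eq_one {A ι : Type*} [Ring A] [Algebra ℂ A] {d r : ℕ}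
    (hd : 0 < d) (Q : ι → MvPolynomial (Fin r) ℂ) (P : MvPolynomial (Fin r) ℂ)
    (hscalar : ∀ a : Fin r → ℂ, (∀ i, a i ^ d = 1) →
      (∀ ℓ, MvPolynomial.eval a (Q ℓ) = 0) → MvPolynomial.eval a P = 0)
    (f : Fin r → A) (hcomm : ∀ i j, f i * f j = f j * f i) (horder : ∀ i, f i ^ d = 1)
    (hzero : ∀ ℓ, mvEval f (Q ℓ) = 0) :
    mvEval f P = 0 := by
  classical
  let S := Algebra.adjoin ℂ (Set.range f)
  have : IsMulCommutative S := Algebra.isMulCommutative_adjoin ℂ <| by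
    rintro _ ⟨i, rfl⟩ _ ⟨j, rfl⟩
    exact hcomm i j
  let g : Fin r → S := fun i => ⟨f i, Algebra.subset_adjoin ⟨i, rfl⟩⟩
  have hval (R : MvPolynomial (Fin r) ℂ) : mvEval f R = S.val (MvPolynomial.aeval g R) := by
    rw [← mvEval_eq_aeval, S.val.map_mvEval]
    rfl
  have hg (i : Fin r) : aeval (g i) (nodal (nthRootsFinset d (1 : ℂ)) id) = 0 :=
    aeval_nodal_nthRootsFinset_one hd (Complex.isPrimitiveRoot_exp d hd.ne')
      (Subtype.ext (horder i))
  have hgrid : ∀ v ∈ Fintype.piFinset fun _ => nthRootsFinset d (1 : ℂ),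
      (∀ ℓ, MvPolynomial.eval v (Q ℓ) = 0) → MvPolynomial.eval v P = 0 := fun v hv =>
    hscalar v fun i => (mem_nthRootsFinset hd 1).mp (Fintype.mem_piFinset.mp hv i)
  have hQ (ℓ : ι) : MvPolynomial.aeval g (Q ℓ) = 0 :=
    Subtype.val_injective ((hval (Q ℓ)).symm.trans (hzero ℓ))
  rw [hval, aeval_eq_zero_of_forall_mem_piFinset hg Q P hgrid hQ, map_zero]

theorem stmt1_general (d r m : ℕ) (hd : 1 ≤ d)
    (Q : Fin m → MvPolynomial (Fin r) ℂ) (Qt : MvPolynomial (Fin r) ℂ)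
    (hscalar : ∀ a : Fin r → ℂ, (∀ i, (a i) ^ d = 1) →
      (∀ ℓ, MvPolynomial.eval a (Q ℓ) = 0) → MvPolynomial.eval a Qt = 0)
    {H : Type*} [NormedAddCommGroup H] [InnerProductSpace ℂ H]
    (A : Fin r → (H →L[ℂ] H))
    (hcomm : ∀ i j, A i * A j = A j * A i)
    (horder : ∀ i, A i ^ d = 1)
    (hzero : ∀ ℓ, mvEval A (Q ℓ) = 0) :
    mvEval A Qt = 0 :=
  mvEval_eq_zero_of_forall_pow_eq_one hd Q Qt hscalar A hcomm horder hzero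

theorem stmt1 (d r m : ℕ) (hd : 1 ≤ d)
    (Q : Fin m → MvPolynomial (Fin r) ℂ) (Qt : MvPolynomial (Fin r) ℂ)
    (hscalar : ∀ a : Fin r → ℂ, (∀ i, (a i) ^ d = 1) →
      (∀ ℓ, MvPolynomial.eval a (Q ℓ) = 0) → MvPolynomial.eval a Qt = 0)
    {H : Type*} [NormedAddCommGroup H] [InnerProductSpace ℂ H] [CompleteSpace H]
    (A : Fin r → (H →L[ℂ] H))
    (hcomm : ∀ i j, A i * A j = A j * A i)
    (hnormal : ∀ i, A i * star (A i) = star (A i) * A i)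
    (horder : ∀ i, A i ^ d = 1)
    (hzero : ∀ ℓ, mvEval A (Q ℓ) = 0) :
    mvEval A Qt = 0 :=
  stmt1_general d r m hd Q Qt hscalar A hcomm horder hzero
end

section
/- Let A be an associative unital algebra over ℂ, let d ≥ 1 and ℓ ≥ 1, let b_1, …, b_ℓ ∈ A satisfy b_i^d = 1 for all i, and let S_1, …, S_ℓ ⊆ {0, 1, …, d−1}. Suppose that for every i ∈ {1, …, ℓ−1} one has (∏_{k∈{0,…,d−1}∖S_i}(λ_k·1 − b_i)) · (∏_{k∈S_{i+1}}(λ_k·1 − b_{i+1})) = 0. Then (∏_{k∈{0,…,d−1}∖S_1}(λ_k·1 − b_1)) · (∏_{k∈S_ℓ}(λ_k·1 − b_ℓ)) = 0. -/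
open scoped BigOperators

/-- `lam d k = exp(2πik/d)`, the `k`-th `d`-th root of unity. -/
noncomputable def lam (d : ℕ) (k : Fin d) : ℂ :=
  Complex.exp (2 * Real.pi * Complex.I * (k : ℕ) / d)

/-- The product of the (pairwise commuting) elements `f k`, `k ∈ T`, taken in increasing
order of the index `k`.  (Since the factors commute, the order is immaterial.) -/
def ordProd {d : ℕ} {A : Type*} [Monoid A] (T : Finset (Fin d)) (f : Fin d → A) : A :=
  ((T.sort (· ≤ ·)).map f).prod

/-!
Put `P_T = rootsPoly d T = ∏_{k ∈ T} (λ_k - X) ∈ ℂ[X]`, so that the products in the statement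
are `P_T(b)`. For every `T`, `P_T · P_{Tᶜ} = ±(X^d - 1)` annihilates any `b` with `b^d = 1`, and
`P_T`, `P_{Tᶜ}` are coprime because the `λ_k` are distinct. A Bézout identity
`u P_T + v P_{Tᶜ} = 1`, evaluated at `b`, then lets a relation `x · P_T(b) = 0` and a relation
`P_{Tᶜ}(b) · y = 0` combine to `x · y = 0`, and the claim follows by induction along the chain.
-/

open Polynomial

theorem lam_eq_pow (d : ℕ) (k : Fin d) :
    lam d k = Complex.exp (2 * Real.pi * Complex.I / d) ^ (k : ℕ) := by
  rw [← Complex.exp_nat_mul, lam]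
  ring_nf

theorem lam_injective (d : ℕ) (hd : 1 ≤ d) : Function.Injective (lam d) := by
  intro i j hij
  rw [lam_eq_pow, lam_eq_pow] at hij
  exact Fin.ext ((Complex.isPrimitiveRoot_exp d (by omega)).pow_inj i.isLt j.isLt hij)

theorem prod_X_sub_C_lam (d : ℕ) (hd : 1 ≤ d) :
    ∏ k : Fin d, (X - C (lam d k)) = X ^ d - 1 := by
  rw [← C_1, X_pow_sub_C_eq_prod (Complex.isPrimitiveRoot_exp d (by omega)) (by omega)
    (one_pow d), ← Fin.prod_univ_eq_prod_range]
  simp only [lam_eq_pow, mul_one]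

noncomputable def rootsPoly (d : ℕ) (T : Finset (Fin d)) : ℂ[X] :=
  ∏ k ∈ T, (C (lam d k) - X)

theorem ordProd_eq_aeval_rootsPoly {d : ℕ} {A : Type*} [Ring A] [Algebra ℂ A]
    (T : Finset (Fin d)) (b : A) :
    ordProd T (fun k => lam d k • (1 : A) - b) = aeval b (rootsPoly d T) := by
  have hsort : rootsPoly d T = ((T.sort (· ≤ ·)).map fun k => C (lam d k) - X).prod := by
    rw [rootsPoly, Finset.prod_eq_multiset_prod, ← Finset.sort_eq T (· ≤ ·), Multiset.map_coe,
      Multiset.prod_coe]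
  rw [hsort, ordProd, map_list_prod, List.map_map]
  congr 1
  ext k
  simp [Algebra.algebraMap_eq_smul_one]

theorem rootsPoly_mul_rootsPoly_compl (d : ℕ) (hd : 1 ≤ d) (T : Finset (Fin d)) :
    rootsPoly d T * rootsPoly d Tᶜ = (-1) ^ d * (X ^ d - 1) := by
  calc rootsPoly d T * rootsPoly d Tᶜ = ∏ k : Fin d, (-1) * (X - C (lam d k)) := by
        rw [rootsPoly, rootsPoly, Finset.prod_mul_prod_compl]
        exact Finset.prod_congr rfl fun k _ => by ring
    _ = (-1) ^ d * (X ^ d - 1) := by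
        rw [Finset.prod_mul_distrib, Finset.prod_const, Finset.card_univ, Fintype.card_fin,
          prod_X_sub_C_lam d hd]

theorem isCoprime_rootsPoly_compl (d : ℕ) (hd : 1 ≤ d) (T : Finset (Fin d)) :
    IsCoprime (rootsPoly d T) (rootsPoly d Tᶜ) := by
  refine IsCoprime.prod_left fun k hk => IsCoprime.prod_right fun j hj => ?_
  have hkj : k ≠ j := fun h => Finset.mem_compl.mp hj (h ▸ hk)
  simpa using (pairwise_coprime_X_sub_C (lam_injective d hd) hkj).neg_left.neg_right

theorem aeval_rootsPoly_compl_mul_aeval_rootsPoly {d : ℕ} (hd : 1 ≤ d) {A : Type*} [Ring A]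
    [Algebra ℂ A] (T : Finset (Fin d)) {b : A} (hb : b ^ d = 1) :
    aeval b (rootsPoly d Tᶜ) * aeval b (rootsPoly d T) = 0 := by
  rw [← map_mul, mul_comm, rootsPoly_mul_rootsPoly_compl d hd]
  simp [hb]

theorem IsCoprime.mul_eq_zero_of_aeval {R A : Type*} [CommRing R] [Ring A] [Algebra R A]
    {q p : R[X]} (hqp : IsCoprime q p) {b x y : A} (hx : x * aeval b q = 0)
    (hy : aeval b p * y = 0) : x * y = 0 := by
  obtain ⟨u, v, huv⟩ := hqp
  have hbezout : aeval b u * aeval b q + aeval b v * aeval b p = 1 := by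
    simpa only [map_add, map_mul, map_one] using congrArg (aeval b) huv
  have hcomm : aeval b u * aeval b q = aeval b q * aeval b u := by
    rw [← map_mul, mul_comm, map_mul]
  calc x * y = x * (aeval b u * aeval b q + aeval b v * aeval b p) * y := by
        rw [hbezout, mul_one]
    _ = x * aeval b q * (aeval b u * y) + x * aeval b v * (aeval b p * y) := by
        rw [hcomm]; noncomm_ring
    _ = 0 := by rw [hx, hy, zero_mul, mul_zero, add_zero]

theorem stmt4 {A : Type*} [Ring A] [Algebra ℂ A] (d l : ℕ) (hd : 1 ≤ d) (hl : 1 ≤ l)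
    (b : Fin l → A) (hb : ∀ i, b i ^ d = 1) (S : Fin l → Finset (Fin d))
    (hchain : ∀ i : ℕ, (hi : i + 1 < l) →
      ordProd (S ⟨i, by omega⟩)ᶜ (fun k => lam d k • (1 : A) - b ⟨i, by omega⟩) *
        ordProd (S ⟨i + 1, hi⟩) (fun k => lam d k • (1 : A) - b ⟨i + 1, hi⟩) = 0) :
    ordProd (S ⟨0, by omega⟩)ᶜ (fun k => lam d k • (1 : A) - b ⟨0, by omega⟩) *
      ordProd (S ⟨l - 1, by omega⟩) (fun k => lam d k • (1 : A) - b ⟨l - 1, by omega⟩) = 0 := by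
  simp only [ordProd_eq_aeval_rootsPoly] at hchain ⊢
  have hprefix : ∀ n (hn : n < l),
      aeval (b ⟨0, by omega⟩) (rootsPoly d (S ⟨0, by omega⟩)ᶜ) *
        aeval (b ⟨n, hn⟩) (rootsPoly d (S ⟨n, hn⟩)) = 0 := by
    intro n
    induction n with
    | zero => exact fun _ => aeval_rootsPoly_compl_mul_aeval_rootsPoly hd _ (hb _)
    | succ n ih =>
      exact fun hn =>
        (isCoprime_rootsPoly_compl d hd _).mul_eq_zero_of_aeval (ih (by omega)) (hchain n hn)
  exact hprefix (l - 1) (by omega)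
end

section
/- Let e ≤ d be positive integers. Let p ∈ ℂ[x] be a polynomial whose restriction to U_e is an injective map into U_d, let B = {p(λ) : λ^e = 1} ⊆ U_d, let ρ ∈ ℂ[x] be a polynomial with ρ(μ) = 1 for μ ∈ B and ρ(μ) = 0 for μ ∈ U_d ∖ B, and let q ∈ ℂ[x] be a polynomial with q(p(λ)) = λ for every λ with λ^e = 1. Let C_1, …, C_k be pairwise commuting normal complex n×n matrices with C_i^d = I and ρ(C_i) = I for all i. Then every eigenvalue of each C_i belongs to B; the matrices A_i = q(C_i), i ∈ [k], are pairwise commuting normal matrices satisfying A_i^e = I; and p(A_i) = C_i for all i. -/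
/-!
Since `C ^ d = 1` and `X ^ d - 1` is squarefree and split over `ℂ`, `g(C) = 0` for every `g`
vanishing on `U_d`. As `ρ(C) = 1` and `ρ` vanishes on `U_d ∖ B`, it follows that `f(C) = g(C)`
whenever `f` and `g` agree on `B`: apply this to `q ^ e` and `1`, and to `p ∘ q` and `X`, which
agree on `B` because `q ∘ p` is the identity on `U_e`. The spectrum lies in `B` by the spectral
mapping `ρ(σ(C)) ⊆ σ(ρ(C)) = {1}`, and `q(C)` inherits commutation and normality from `C`.
-/

open Polynomial

section Commute

variable {R A : Type*} [CommSemiring R] [Semiring A] [Algebra R A]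

theorem Commute.aeval {a b : A} (h : Commute a b) (f g : R[X]) :
    Commute (Polynomial.aeval a f) (Polynomial.aeval b g) :=
  have ha : Commute b (Polynomial.aeval a f) :=
    Algebra.commute_of_mem_adjoin_singleton_of_commute (aeval_mem_adjoin_singleton R a) h.symm
  Algebra.commute_of_mem_adjoin_singleton_of_commute (aeval_mem_adjoin_singleton R b) ha.symm

theorem IsStarNormal.aeval [StarRing R] [StarRing A] [StarModule R A] {a : A} [IsStarNormal a]
    (f : R[X]) : IsStarNormal (Polynomial.aeval a f) := by
  set S := StarAlgebra.adjoin R {a}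
  have hf : Polynomial.aeval a f ∈ S :=
    Algebra.adjoin_le (s := {a}) (S := S.toSubalgebra) (StarAlgebra.subset_adjoin R {a})
      (aeval_mem_adjoin_singleton R a)
  exact ⟨congrArg Subtype.val (mul_comm (⟨_, star_mem hf⟩ : S) ⟨_, hf⟩)⟩

end Commute

theorem Polynomial.X_pow_sub_one_dvd_of_forall_eval_eq_zero {K : Type*} [Field K] {d : ℕ} {ζ : K}
    (hd : 0 < d) (hζ : IsPrimitiveRoot ζ d) {g : K[X]}
    (hg : ∀ x : K, x ^ d = 1 → g.eval x = 0) : X ^ d - 1 ∣ g := by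
  rw [X_pow_sub_one_eq_prod hd hζ]
  exact Finset.prod_dvd_of_coprime
    (fun x _ y _ hxy ↦ isCoprime_X_sub_C_of_isUnit_sub (sub_ne_zero_of_ne hxy).isUnit)
    (fun x hx ↦ dvd_iff_isRoot.mpr (hg x ((mem_nthRootsFinset hd 1).mp hx)))

section PowEqOne

variable {K A : Type*} [Field K] [Ring A] [Algebra K A] {d : ℕ} {a : A}

theorem aeval_eq_zero_of_pow_eq_one {ζ : K} (hd : 0 < d) (hζ : IsPrimitiveRoot ζ d)
    (ha : a ^ d = 1) {g : K[X]} (hg : ∀ x : K, x ^ d = 1 → g.eval x = 0) : aeval a g = 0 := by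
  obtain ⟨h, rfl⟩ := X_pow_sub_one_dvd_of_forall_eval_eq_zero hd hζ hg
  simp [ha]

variable {S : Set K} {ρ : K[X]}

theorem aeval_eq_aeval_of_forall_mem_eval_eq {ζ : K} (hd : 0 < d) (hζ : IsPrimitiveRoot ζ d)
    (ha : a ^ d = 1)
    (hρ : ∀ x : K, x ^ d = 1 → x ∉ S → ρ.eval x = 0) (hρa : aeval a ρ = 1) (f g : K[X])
    (hfg : ∀ x ∈ S, f.eval x = g.eval x) : aeval a f = aeval a g := by
  have : aeval a ((f - g) * ρ) = 0 := aeval_eq_zero_of_pow_eq_one hd hζ ha fun x hx ↦ by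
    by_cases hxS : x ∈ S
    · simp [hfg x hxS]
    · simp [hρ x hx hxS]
  rwa [map_mul, hρa, mul_one, map_sub, sub_eq_zero] at this

theorem spectrum_subset_of_aeval_eq_one (ha : a ^ d = 1)
    (hρ : ∀ x : K, x ^ d = 1 → x ∉ S → ρ.eval x = 0) (hρa : aeval a ρ = 1) :
    spectrum K a ⊆ S := by
  intro μ hμ
  have : Nontrivial A := by
    by_contra h
    rw [not_nontrivial_iff_subsingleton] at h
    simp [spectrum.of_subsingleton] at hμ
  have hμd : μ ^ d = 1 := by simpa [ha, spectrum.one_eq] using spectrum.pow_mem_pow a d hμ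
  by_contra hμS
  have := spectrum.subset_polynomial_aeval a ρ ⟨μ, hμ, rfl⟩
  simp [hρa, spectrum.one_eq, hρ μ hμd hμS] at this

end PowEqOne

theorem stmt8_general (e d : ℕ) (he : 1 ≤ e) (hed : e ≤ d)
    (p : Polynomial ℂ)
    (ρ : Polynomial ℂ)
    (hρ0 : ∀ μ : ℂ, μ ^ d = 1 → ¬ (∃ l : ℂ, l ^ e = 1 ∧ p.eval l = μ) → ρ.eval μ = 0)
    (q : Polynomial ℂ)
    (hq : ∀ l : ℂ, l ^ e = 1 → q.eval (p.eval l) = l)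
    (k n : ℕ) (C : Fin k → Matrix (Fin n) (Fin n) ℂ)
    (hcomm : ∀ i j, C i * C j = C j * C i)
    (hnormal : ∀ i, C i * star (C i) = star (C i) * C i)
    (horder : ∀ i, C i ^ d = 1)
    (hρC : ∀ i, Polynomial.aeval (C i) ρ = 1) :
    (∀ i, ∀ μ ∈ spectrum ℂ (C i), ∃ l : ℂ, l ^ e = 1 ∧ p.eval l = μ) ∧
    (∀ i j, Polynomial.aeval (C i) q * Polynomial.aeval (C j) q =
        Polynomial.aeval (C j) q * Polynomial.aeval (C i) q) ∧
    (∀ i, Polynomial.aeval (C i) q * star (Polynomial.aeval (C i) q) =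
        star (Polynomial.aeval (C i) q) * Polynomial.aeval (C i) q) ∧
    (∀ i, Polynomial.aeval (C i) q ^ e = 1) ∧
    (∀ i, Polynomial.aeval (Polynomial.aeval (C i) q) p = C i) := by
  have hd : 0 < d := he.trans hed
  have hagree := fun i ↦ aeval_eq_aeval_of_forall_mem_eval_eq hd
    (Complex.isPrimitiveRoot_exp d hd.ne') (horder i) hρ0 (hρC i)
  refine ⟨fun i ↦ spectrum_subset_of_aeval_eq_one (horder i) hρ0 (hρC i),
    fun i j ↦ (Commute.aeval (hcomm i j) q q).eq, fun i ↦ ?_, fun i ↦ ?_, fun i ↦ ?_⟩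
  · have : IsStarNormal (C i) := ⟨(hnormal i).symm⟩
    exact (IsStarNormal.aeval (a := C i) q).star_comm_self.symm.eq
  · simpa using hagree i (q ^ e) 1 fun _ ⟨l, hl, hμ⟩ ↦ by simp [← hμ, hq l hl, hl]
  · simpa [aeval_comp] using hagree i (p.comp q) X fun _ ⟨l, hl, hμ⟩ ↦ by
      simp [← hμ, hq l hl]

theorem stmt8 (e d : ℕ) (he : 1 ≤ e) (hed : e ≤ d)
    (p : Polynomial ℂ)
    (hmap : ∀ l : ℂ, l ^ e = 1 → (p.eval l) ^ d = 1)
    (hinj : ∀ l l' : ℂ, l ^ e = 1 → l' ^ e = 1 → p.eval l = p.eval l' → l = l')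
    (ρ : Polynomial ℂ)
    (hρ1 : ∀ μ : ℂ, (∃ l : ℂ, l ^ e = 1 ∧ p.eval l = μ) → ρ.eval μ = 1)
    (hρ0 : ∀ μ : ℂ, μ ^ d = 1 → ¬ (∃ l : ℂ, l ^ e = 1 ∧ p.eval l = μ) → ρ.eval μ = 0)
    (q : Polynomial ℂ)
    (hq : ∀ l : ℂ, l ^ e = 1 → q.eval (p.eval l) = l)
    (k n : ℕ) (C : Fin k → Matrix (Fin n) (Fin n) ℂ)
    (hcomm : ∀ i j, C i * C j = C j * C i)
    (hnormal : ∀ i, C i * star (C i) = star (C i) * C i)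
    (horder : ∀ i, C i ^ d = 1)
    (hρC : ∀ i, Polynomial.aeval (C i) ρ = 1) :
    (∀ i, ∀ μ ∈ spectrum ℂ (C i), ∃ l : ℂ, l ^ e = 1 ∧ p.eval l = μ) ∧
    (∀ i j, Polynomial.aeval (C i) q * Polynomial.aeval (C j) q =
        Polynomial.aeval (C j) q * Polynomial.aeval (C i) q) ∧
    (∀ i, Polynomial.aeval (C i) q * star (Polynomial.aeval (C i) q) =
        star (Polynomial.aeval (C i) q) * Polynomial.aeval (C i) q) ∧
    (∀ i, Polynomial.aeval (C i) q ^ e = 1) ∧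
    (∀ i, Polynomial.aeval (Polynomial.aeval (C i) q) p = C i) :=
  stmt8_general e d he hed p ρ hρ0 q hq k n C hcomm hnormal horder hρC
end
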